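/- Suppose discrete random variables satisfy: for each node X_k in layer j+1 or beyond of a DAG G (with layer decomposition L_1,...,L_r and ancestral sets A_j), H(X_k | pa(k)) = h* is constant across all nodes k, and for each X_k not in A_{j+1} there exists an ancestor X_i of X_k in L_{j+1} with I(X_k; X_i | A_j) > 0. Then H(X_i | A_j) < H(X_k | A_j) for that ancestor X_i. -/

import Mathlib

open scoped Classical BigOperators
open Finset

noncomputable section

/-- Probability of an event under a mass function on a finite sample space. -/
def prE {Ω : Type*} [Fintype Ω] (p : Ω → ℝ) (s : Set Ω) : ℝ :=
  ∑ ω, if ω ∈ s then p ω else 0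

/-- Conditional probability P(s | t). -/
def condPr {Ω : Type*} [Fintype Ω] (p : Ω → ℝ) (s t : Set Ω) : ℝ :=
  prE p (s ∩ t) / prE p t

/-- Independence of two random variables. -/
def IndepRV {Ω α β : Type*} [Fintype Ω] (p : Ω → ℝ) (X : Ω → α) (Y : Ω → β) : Prop :=
  ∀ a b, prE p {ω | X ω = a ∧ Y ω = b} = prE p {ω | X ω = a} * prE p {ω | Y ω = b}

/-- Conditional independence of X and Y given Z (cross-multiplied form). -/
def CondIndepRV {Ω α β γ : Type*} [Fintype Ω] (p : Ω → ℝ)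
    (X : Ω → α) (Y : Ω → β) (Z : Ω → γ) : Prop :=
  ∀ a b c,
    prE p {ω | X ω = a ∧ Y ω = b ∧ Z ω = c} * prE p {ω | Z ω = c} =
      prE p {ω | X ω = a ∧ Z ω = c} * prE p {ω | Y ω = b ∧ Z ω = c}

/-- Shannon entropy of a finitely-supported random variable. -/
def entH {Ω α : Type*} [Fintype Ω] [Fintype α] (p : Ω → ℝ) (X : Ω → α) : ℝ :=
  -∑ a : α, prE p {ω | X ω = a} * Real.log (prE p {ω | X ω = a})

/-- Conditional entropy H(X | Y). -/
def condEnt {Ω α β : Type*} [Fintype Ω] [Fintype α] [Fintype β]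
    (p : Ω → ℝ) (X : Ω → α) (Y : Ω → β) : ℝ :=
  entH p (fun ω => (X ω, Y ω)) - entH p Y

/-- Mutual information I(X;Y). -/
def mutInfo {Ω α β : Type*} [Fintype Ω] [Fintype α] [Fintype β]
    (p : Ω → ℝ) (X : Ω → α) (Y : Ω → β) : ℝ :=
  entH p X + entH p Y - entH p (fun ω => (X ω, Y ω))

/-- Conditional mutual information I(X;Y | Z). -/
def condMI {Ω α β γ : Type*} [Fintype Ω] [Fintype α] [Fintype β] [Fintype γ]
    (p : Ω → ℝ) (X : Ω → α) (Y : Ω → β) (Z : Ω → γ) : ℝ :=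
  entH p (fun ω => (X ω, Z ω)) + entH p (fun ω => (Y ω, Z ω)) -
    entH p (fun ω => (X ω, Y ω, Z ω)) - entH p Z

/-- The parent set of `k` in the directed graph `E`. -/
def paF {d : ℕ} (E : Fin d → Fin d → Prop) (k : Fin d) : Finset (Fin d) :=
  Finset.univ.filter (fun i => E i k)

/-- The restriction of a configuration to a subset of coordinates, as a random variable. -/
def restr {d : ℕ} {β : Type*} (s : Finset (Fin d)) : (Fin d → β) → (↥s → β) :=
  fun x i => x i.1

/-- `P` factorizes over the DAG with edge relation `E`:
there are nonnegative Markov kernels, each depending only on the parent coordinates,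
whose product is `p`. -/
def Factorizes {d : ℕ} {β : Type*} [Fintype β] (E : Fin d → Fin d → Prop)
    (p : (Fin d → β) → ℝ) : Prop :=
  ∃ f : Fin d → β → (Fin d → β) → ℝ,
    (∀ k b x, 0 ≤ f k b x) ∧ (∀ k x, ∑ b, f k b x = 1) ∧
    (∀ k b x y, (∀ j, E j k → x j = y j) → f k b x = f k b y) ∧
    (∀ x, p x = ∏ k, f k (x k) x)

/-- Ancestral sets of the layer decomposition: `Aset E j` is the union of the first `j`
layers, i.e. `Aset E (j+1)` consists of all nodes whose parents all lie in `Aset E j`. -/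
def Aset {d : ℕ} (E : Fin d → Fin d → Prop) : ℕ → Finset (Fin d)
  | 0 => ∅
  | (j+1) => Finset.univ.filter (fun k => ∀ i, E i k → i ∈ Aset E j)

/-!
Every node of `A_j` is a nondescendant of `i`, and `pa(i) ⊆ A_j`; likewise `X_i` and `A_j` are
nondescendants of `k`. By the local Markov property of a factorizing law, conditioning on extra
nondescendants does not change the conditional entropy of a node given its parents, so
`H(X_i | A_j) = H(X_i | pa(i)) = h*` and `H(X_k | X_i, A_j) ≥ H(X_k | X_i, A_j, pa(k)) = h*`.
Then `H(X_k | A_j) = H(X_k | X_i, A_j) + I(X_k; X_i | A_j) > h*`.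

The local Markov property is obtained by summing out the descendants of `k`, one sink at a time:
a kernel summed out against a function not depending on its node contributes a factor
`1 / card β`.
-/

section Entropy

variable {Ω α β γ δ : Type*} [Fintype Ω] {p : Ω → ℝ}

lemma prE_nonneg (hp : ∀ ω, 0 ≤ p ω) (s : Set Ω) : 0 ≤ prE p s :=
  Finset.sum_nonneg fun ω _ => by split_ifs <;> simp [hp ω]

lemma prE_pos (hp : ∀ ω, 0 < p ω) {s : Set Ω} {ω₀ : Ω} (h : ω₀ ∈ s) : 0 < prE p s :=
  Finset.sum_pos' (fun ω _ => by split_ifs <;> simp [(hp ω).le])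
    ⟨ω₀, mem_univ _, by simp [h, hp ω₀]⟩

lemma sum_mul_comp_eq_sum_prE [Fintype α] (V : Ω → α) (F : α → ℝ) :
    ∑ ω, p ω * F (V ω) = ∑ a, prE p {ω | V ω = a} * F a := by
  simp only [prE, Finset.sum_mul]
  rw [Finset.sum_comm]
  refine sum_congr rfl fun ω _ => ?_
  simp [ite_mul]

lemma sum_prE_eq_sum [Fintype α] (V : Ω → α) : ∑ a, prE p {ω | V ω = a} = ∑ ω, p ω := by
  simpa using (sum_mul_comp_eq_sum_prE (p := p) V fun _ => 1).symm

lemma sum_prE_prod_mk_left [Fintype α] (X : Ω → α) (Z : Ω → γ) (c : γ) :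
    ∑ a, prE p {ω | (X ω, Z ω) = (a, c)} = prE p {ω | Z ω = c} := by
  simp only [prE]
  rw [Finset.sum_comm]
  refine sum_congr rfl fun ω _ => ?_
  by_cases hc : Z ω = c <;> simp [hc]

def atomPr (p : Ω → ℝ) (V : Ω → α) (ω : Ω) : ℝ :=
  prE p {ω' | V ω' = V ω}

lemma atomPr_pos (hp : ∀ ω, 0 < p ω) (V : Ω → α) (ω : Ω) : 0 < atomPr p V ω :=
  prE_pos hp (show ω ∈ {ω' | V ω' = V ω} from rfl)

lemma entH_eq_sum [Fintype α] (V : Ω → α) :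
    entH p V = -∑ ω, p ω * Real.log (atomPr p V ω) := by
  rw [entH, ← sum_mul_comp_eq_sum_prE V fun a => Real.log (prE p {ω | V ω = a})]
  rfl

lemma entH_congr [Fintype α] [Fintype β] {X : Ω → α} {Y : Ω → β}
    (h : ∀ ω ω', X ω = X ω' ↔ Y ω = Y ω') : entH p X = entH p Y := by
  simp only [entH_eq_sum, atomPr, h]

lemma condEnt_congr_right [Fintype α] [Fintype β] [Fintype γ] (X : Ω → α) {Y : Ω → β}
    {Y' : Ω → γ} (h : ∀ ω ω', Y ω = Y ω' ↔ Y' ω = Y' ω') :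
    condEnt p X Y = condEnt p X Y' := by
  rw [condEnt, condEnt, entH_congr h,
    entH_congr (X := fun ω => (X ω, Y ω)) (Y := fun ω => (X ω, Y' ω)) fun ω ω' => by
      simp only [Prod.ext_iff, h]]

lemma condMI_eq_condEnt_sub [Fintype α] [Fintype β] [Fintype γ]
    (X : Ω → α) (Y : Ω → β) (Z : Ω → γ) :
    condMI p X Y Z = condEnt p X Z - condEnt p X (fun ω => (Y ω, Z ω)) := by
  simp only [condMI, condEnt]
  ring

lemma condMI_eq_sum_log [Fintype α] [Fintype β] [Fintype γ] (hp : ∀ ω, 0 < p ω)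
    (X : Ω → α) (Y : Ω → β) (Z : Ω → γ) :
    condMI p X Y Z = ∑ ω, p ω * Real.log
      (atomPr p (fun ω => (X ω, Y ω, Z ω)) ω * atomPr p Z ω /
        (atomPr p (fun ω => (X ω, Z ω)) ω * atomPr p (fun ω => (Y ω, Z ω)) ω)) := by
  have hlog : ∀ ω, Real.log (atomPr p (fun ω => (X ω, Y ω, Z ω)) ω * atomPr p Z ω /
        (atomPr p (fun ω => (X ω, Z ω)) ω * atomPr p (fun ω => (Y ω, Z ω)) ω)) =
      Real.log (atomPr p (fun ω => (X ω, Y ω, Z ω)) ω) + Real.log (atomPr p Z ω) -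
        Real.log (atomPr p (fun ω => (X ω, Z ω)) ω) -
        Real.log (atomPr p (fun ω => (Y ω, Z ω)) ω) := fun ω => by
    have hA := atomPr_pos hp (fun ω => (X ω, Y ω, Z ω)) ω
    have hB := atomPr_pos hp (fun ω => (X ω, Z ω)) ω
    have hC := atomPr_pos hp (fun ω => (Y ω, Z ω)) ω
    have hD := atomPr_pos hp Z ω
    rw [Real.log_div (mul_pos hA hD).ne' (mul_pos hB hC).ne', Real.log_mul hA.ne' hD.ne',
      Real.log_mul hB.ne' hC.ne']
    ring
  simp only [condMI, entH_eq_sum, hlog, mul_add, mul_sub, sum_add_distrib, sum_sub_distrib]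
  ring

lemma condMI_eq_zero_of_condIndepRV [Fintype α] [Fintype β] [Fintype γ] (hp : ∀ ω, 0 < p ω)
    {X : Ω → α} {Y : Ω → β} {Z : Ω → γ} (h : CondIndepRV p X Y Z) : condMI p X Y Z = 0 := by
  rw [condMI_eq_sum_log hp]
  refine sum_eq_zero fun ω _ => ?_
  have hB := atomPr_pos hp (fun ω => (X ω, Z ω)) ω
  have hC := atomPr_pos hp (fun ω => (Y ω, Z ω)) ω
  simp only [atomPr, Prod.mk.injEq] at hB hC ⊢
  rw [h, div_self (mul_pos hB hC).ne', Real.log_one, mul_zero]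

lemma condMI_nonneg [Fintype α] [Fintype β] [Fintype γ] (hp : ∀ ω, 0 < p ω)
    (X : Ω → α) (Y : Ω → β) (Z : Ω → γ) : 0 ≤ condMI p X Y Z := by
  set A : α × β × γ → ℝ := fun t => prE p {ω | (X ω, Y ω, Z ω) = t}
  set B : α → γ → ℝ := fun a c => prE p {ω | (X ω, Z ω) = (a, c)}
  set C : β → γ → ℝ := fun b c => prE p {ω | (Y ω, Z ω) = (b, c)}
  set D : γ → ℝ := fun c => prE p {ω | Z ω = c}
  set r : α × β × γ → ℝ := fun t => B t.1 t.2.2 * C t.2.1 t.2.2 / (A t * D t.2.2)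
  set V : Ω → α × β × γ := fun ω => (X ω, Y ω, Z ω)
  have hneg : -condMI p X Y Z = ∑ ω, p ω * Real.log (r (V ω)) := by
    rw [condMI_eq_sum_log hp, ← sum_neg_distrib]
    refine sum_congr rfl fun ω _ => ?_
    rw [← mul_neg, ← Real.log_inv, inv_div]
    rfl
  have hlog : ∑ ω, p ω * Real.log (r (V ω)) ≤ ∑ ω, p ω * r (V ω) - ∑ ω, p ω := by
    rw [← sum_sub_distrib]
    refine sum_le_sum fun ω _ => ?_
    have hr : 0 < r (V ω) := div_pos
      (mul_pos (atomPr_pos hp (fun ω => (X ω, Z ω)) ω) (atomPr_pos hp (fun ω => (Y ω, Z ω)) ω))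
      (mul_pos (atomPr_pos hp V ω) (atomPr_pos hp Z ω))
    nlinarith [Real.log_le_sub_one_of_pos hr, hp ω]
  have hmass : ∑ ω, p ω * r (V ω) ≤ ∑ ω, p ω :=
    calc ∑ ω, p ω * r (V ω) = ∑ t, A t * r t := sum_mul_comp_eq_sum_prE V r
      _ ≤ ∑ t : α × β × γ, B t.1 t.2.2 * C t.2.1 t.2.2 / D t.2.2 := by
        refine sum_le_sum fun t _ => ?_
        have hnn := prE_nonneg (p := p) fun ω => (hp ω).le
        rcases (show 0 ≤ A t from hnn _).eq_or_lt with hA | hA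
        · rw [← hA, zero_mul]
          exact div_nonneg (mul_nonneg (hnn _) (hnn _)) (hnn _)
        · rw [← mul_div_assoc, mul_div_mul_left _ _ hA.ne']
      _ = ∑ c, (∑ a, B a c) * (∑ b, C b c) / D c := by
        simp only [Fintype.sum_prod_type, Finset.sum_mul_sum, Finset.sum_div]
        exact (sum_congr rfl fun a _ => Finset.sum_comm).trans Finset.sum_comm
      _ = ∑ c, D c := by
        simp only [B, C, D, sum_prE_prod_mk_left, mul_self_div_self]
      _ = ∑ ω, p ω := sum_prE_eq_sum Z
  linarith

lemma condEnt_eq_of_condIndepRV [Fintype α] [Fintype β] [Fintype δ] (hp : ∀ ω, 0 < p ω)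
    {X : Ω → α} {Y : Ω → β} {W : Ω → δ} (h : CondIndepRV p X Y W)
    (hW : ∀ ω ω', Y ω = Y ω' → W ω = W ω') : condEnt p X Y = condEnt p X W := by
  have hzero := condMI_eq_zero_of_condIndepRV hp h
  rw [condMI_eq_condEnt_sub,
    condEnt_congr_right X (Y := fun ω => (Y ω, W ω)) (Y' := Y) fun ω ω' => by
      simpa [Prod.ext_iff] using fun hY => hW ω ω' hY] at hzero
  linarith

lemma condEnt_le_of_condIndepRV [Fintype α] [Fintype β] [Fintype δ] (hp : ∀ ω, 0 < p ω)
    {X : Ω → α} {Y : Ω → β} {W : Ω → δ} (h : CondIndepRV p X Y W) :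
    condEnt p X W ≤ condEnt p X Y := by
  have hzero := condMI_eq_zero_of_condIndepRV hp h
  have hnonneg := condMI_nonneg hp X W Y
  rw [condMI_eq_condEnt_sub] at hzero hnonneg
  rw [condEnt_congr_right X (Y := fun ω => (W ω, Y ω)) (Y' := fun ω => (Y ω, W ω))
    fun ω ω' => by simp only [Prod.ext_iff, and_comm]] at hnonneg
  linarith

end Entropy

lemma exists_mem_forall_not_rel {ι : Type*} [Finite ι] {E : ι → ι → Prop}
    (hacyc : ∀ a, ¬ Relation.TransGen E a a) {T : Finset ι} (hT : T.Nonempty) :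
    ∃ m ∈ T, ∀ q ∈ T, ¬ E m q := by
  have : Std.Irrefl (flip (Relation.TransGen E)) := ⟨hacyc⟩
  have : IsTrans ι (flip (Relation.TransGen E)) := ⟨fun _ _ _ hab hbc => hbc.trans hab⟩
  obtain ⟨m, hmT, hmin⟩ :=
    (Finite.wellFounded_of_trans_of_irrefl (flip (Relation.TransGen E))).has_min (↑T)
      (Finset.coe_nonempty.mpr hT)
  exact ⟨m, hmT, fun q hq hmq => hmin q hq (Relation.TransGen.single hmq)⟩

section Marginalization

variable {ι β R : Type*} [Fintype ι] [DecidableEq ι] [Fintype β] [CommSemiring R]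

theorem card_mul_sum_mul_kernel (m : ι) {G : (ι → β) → R} {g : β → (ι → β) → R}
    (hG : DependsOn G {m}ᶜ) (hg : ∀ b, DependsOn (g b) {m}ᶜ) (hg1 : ∀ x, ∑ b, g b x = 1) :
    Fintype.card β * ∑ x, G x * g (x m) x = ∑ x, G x := by
  have hupdate : ∀ (x : ι → β) b, ∀ i ∈ ({m}ᶜ : Set ι), Function.update x m b i = x i :=
    fun x b i hi => Function.update_of_ne hi b x
  -- `(b, x) ↦ (x m, x[m ↦ b])` is an involution exchanging `g (x m) x` with `g b x`.
  let swap : Equiv.Perm (β × (ι → β)) :=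
    Function.Involutive.toPerm (fun bx => (bx.2 m, Function.update bx.2 m bx.1))
      fun bx => by simp
  calc Fintype.card β * ∑ x, G x * g (x m) x
      = ∑ bx : β × (ι → β), G bx.2 * g (bx.2 m) bx.2 := by
        simp [Fintype.sum_prod_type]
    _ = ∑ bx : β × (ι → β), G bx.2 * g bx.1 bx.2 :=
        (Fintype.sum_equiv swap _ _ fun bx => by
          show _ = G (Function.update bx.2 m bx.1) *
            g (Function.update bx.2 m bx.1 m) (Function.update bx.2 m bx.1)
          rw [Function.update_self, hG (hupdate bx.2 bx.1), hg bx.1 (hupdate bx.2 bx.1)]).symm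
    _ = ∑ x, G x := by
        rw [Fintype.sum_prod_type, Finset.sum_comm]
        simp [← Finset.mul_sum, hg1]

/-- Summing out the nodes of `T` replaces each of their kernels by the weight `1 / card β`. -/
theorem card_pow_mul_sum_mul_prod_kernel {E : ι → ι → Prop}
    (hacyc : ∀ a, ¬ Relation.TransGen E a a) {g : ι → β → (ι → β) → R}
    (hg : ∀ m b, DependsOn (g m b) {j | E j m}) (hg1 : ∀ m x, ∑ b, g m b x = 1)
    (T : Finset ι) {h : (ι → β) → R} (hh : DependsOn h (↑T)ᶜ) :
    Fintype.card β ^ #T * ∑ x, h x * ∏ m ∈ T, g m (x m) x = ∑ x, h x := by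
  induction T using Finset.strongInduction with
  | H T ih =>
    rcases T.eq_empty_or_nonempty with rfl | hT
    · simp
    obtain ⟨m, hmT, hsink⟩ := exists_mem_forall_not_rel hacyc hT
    have hrest : DependsOn (fun x => h x * ∏ q ∈ T.erase m, g q (x q) x) {m}ᶜ := by
      intro x y hxy
      refine congrArg₂ (· * ·) (hh fun i hi => hxy i fun him => hi (him ▸ hmT))
        (prod_congr rfl fun q hq => ?_)
      rw [hxy q (Finset.ne_of_mem_erase hq)]
      exact hg q _ fun j hj => hxy j fun hjm => hsink q (Finset.mem_of_mem_erase hq) (hjm ▸ hj)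
    have hgm : ∀ b, DependsOn (g m b) {m}ᶜ := fun b =>
      (hg m b).mono fun j hj (hjm : j = m) => hacyc m (.single (by subst hjm; exact hj))
    calc Fintype.card β ^ #T * ∑ x, h x * ∏ q ∈ T, g q (x q) x
        = Fintype.card β ^ #(T.erase m) * (Fintype.card β *
            ∑ x, (h x * ∏ q ∈ T.erase m, g q (x q) x) * g m (x m) x) := by
          rw [← Finset.card_erase_add_one hmT, pow_succ, mul_assoc]
          simp only [← Finset.mul_prod_erase T _ hmT, mul_comm, mul_left_comm]
      _ = ∑ x, h x := by
          rw [card_mul_sum_mul_kernel m hrest hgm (hg1 m)]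
          exact ih _ (Finset.erase_ssubset hmT) (hh.mono (by simp))

end Marginalization

section MarkovProperty

variable {ι β : Type*} [Fintype ι] {E : ι → ι → Prop}
  {f : ι → β → (ι → β) → ℝ}

lemma dependsOn_prod_kernel_nondesc (hf : ∀ m b, DependsOn (f m b) {j | E j m}) (k : ι) :
    DependsOn (fun x => ∏ m ∈ univ.filter (¬ Relation.ReflTransGen E k ·), f m (x m) x)
      {m | ¬ Relation.ReflTransGen E k m} := by
  intro x y hxy
  refine prod_congr rfl fun m hm => ?_
  simp only [mem_filter, mem_univ, true_and] at hm
  rw [hxy m hm]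
  exact hf m _ fun j hj => hxy j fun hkj => hm (hkj.tail hj)

theorem prE_inter_eq_kernel_mul [DecidableEq ι] [Fintype β] (hacyc : ∀ a, ¬ Relation.TransGen E a a)
    (hf : ∀ m b, DependsOn (f m b) {j | E j m}) (hf1 : ∀ m x, ∑ b, f m b x = 1)
    {p : (ι → β) → ℝ} (hp : ∀ x, p x = ∏ m, f m (x m) x) (k : ι) (a : β) {B : Set (ι → β)}
    (hB : DependsOn (· ∈ B) {m | ¬ Relation.ReflTransGen E k m}) {x₁ : ι → β}
    (hx₁ : ∀ x ∈ B, ∀ m, E m k → x m = x₁ m) :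
    prE p ({x | x k = a} ∩ B) = f k a x₁ * prE p B := by
  set D := univ.filter (Relation.ReflTransGen E k)
  have hkD : k ∈ D := by simp [D, Relation.ReflTransGen.refl]
  set H : (ι → β) → ℝ := fun x =>
    (if x ∈ B then 1 else 0) * ∏ m ∈ univ.filter (¬ Relation.ReflTransGen E k ·), f m (x m) x
  have hH : DependsOn H (↑D)ᶜ := fun x y hxy => by
    have hnd : ∀ m ∈ {m | ¬ Relation.ReflTransGen E k m}, x m = y m :=
      fun m hm => hxy m (by simpa [D] using hm)
    simp only [H, hB hnd, dependsOn_prod_kernel_nondesc hf k hnd]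
  have : Nonempty β := ⟨a⟩
  have hcard : (Fintype.card β : ℝ) ^ #D ≠ 0 :=
    pow_ne_zero _ (Nat.cast_ne_zero.mpr Fintype.card_ne_zero)
  have hmarg : (Fintype.card β : ℝ) ^ #D * prE p B = ∑ x, H x := by
    rw [← card_pow_mul_sum_mul_prod_kernel hacyc hf hf1 D hH, prE]
    refine congrArg _ (sum_congr rfl fun x _ => ?_)
    rw [hp, ← prod_filter_mul_prod_filter_not univ (Relation.ReflTransGen E k)]
    by_cases hxB : x ∈ B <;> simp [H, D, hxB, mul_comm]
  have hmarg_k : (Fintype.card β : ℝ) ^ #D * prE p ({x | x k = a} ∩ B) =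
      Fintype.card β * ((Fintype.card β : ℝ) ^ #(D.erase k) *
        ∑ x, (H x * f k a x₁ * if x k = a then 1 else 0) * ∏ m ∈ D.erase k, f m (x m) x) := by
    rw [← card_erase_add_one hkD, pow_succ, mul_comm _ (Fintype.card β : ℝ), mul_assoc, prE]
    refine congrArg _ (congrArg _ (sum_congr rfl fun x _ => ?_))
    by_cases hx : x k = a ∧ x ∈ B
    · obtain ⟨hxk, hxB⟩ := hx
      rw [if_pos (show x ∈ {x | x k = a} ∩ B from ⟨hxk, hxB⟩), hp,
        ← prod_filter_mul_prod_filter_not univ (Relation.ReflTransGen E k),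
        ← mul_prod_erase D _ hkD, hxk, hf k a fun m hm => hx₁ x hxB m hm]
      simp only [H, hxB, if_true]
      ring
    · rw [if_neg (show x ∉ {x | x k = a} ∩ B from hx)]
      by_cases hxk : x k = a <;> simp_all [H]
  refine mul_left_cancel₀ hcard ?_
  calc (Fintype.card β : ℝ) ^ #D * prE p ({x | x k = a} ∩ B)
      = Fintype.card β * ∑ x, H x * f k a x₁ * if x k = a then 1 else 0 := by
        rw [hmarg_k, card_pow_mul_sum_mul_prod_kernel hacyc hf hf1 _ fun x y hxy => by
          rw [hH fun i hi => hxy i fun h => hi (mem_of_mem_erase h), hxy k (by simp)]]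
    _ = ∑ x, H x * f k a x₁ :=
        card_mul_sum_mul_kernel (g := fun b _ => if b = a then 1 else 0) k
          (fun x y hxy => by rw [hH fun i hi => hxy i fun h => hi (h ▸ hkD)])
          (fun _ _ _ _ => rfl) (fun _ => by simp)
    _ = (Fintype.card β : ℝ) ^ #D * (f k a x₁ * prE p B) := by
        rw [mul_left_comm, hmarg, mul_sum]
        simp only [mul_comm]

end MarkovProperty

section LocalMarkov

variable {d : ℕ} {β : Type*} {E : Fin d → Fin d → Prop}

lemma dependsOn_restr (s : Finset (Fin d)) : DependsOn (restr (β := β) s) ↑s :=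
  fun _ _ h => funext fun i => h i.1 i.2

theorem Factorizes.condIndepRV_paF [Fintype β] {p : (Fin d → β) → ℝ}
    (hacyc : ∀ a, ¬ Relation.TransGen E a a) (hfact : Factorizes E p) (k : Fin d) {γ : Type*}
    {Y : (Fin d → β) → γ} (hY : DependsOn Y {m | ¬ Relation.ReflTransGen E k m}) :
    CondIndepRV p (fun x => x k) Y (restr (β := β) (paF E k)) := by
  obtain ⟨f, -, hf1, hf, hp⟩ := hfact
  intro a b c
  set W := restr (β := β) (paF E k)
  have hW : DependsOn W {m | ¬ Relation.ReflTransGen E k m} :=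
    (dependsOn_restr _).mono fun m hm hkm => hacyc k (.tail' hkm (by simpa [paF] using hm))
  let x₁ : Fin d → β := fun m => if h : m ∈ paF E k then c ⟨m, h⟩ else a
  have hx₁ : ∀ x, W x = c → ∀ m, E m k → x m = x₁ m := fun x hx m hm => by
    have hm' : m ∈ paF E k := by simp [paF, hm]
    simp only [x₁, dif_pos hm', ← hx]
    rfl
  have hkernel : ∀ B : Set (Fin d → β), DependsOn (· ∈ B) {m | ¬ Relation.ReflTransGen E k m} →
      (∀ x ∈ B, W x = c) → prE p ({x | x k = a} ∩ B) = f k a x₁ * prE p B :=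
    fun B hB hBW => prE_inter_eq_kernel_mul hacyc (fun m b _ _ h => hf m b _ _ h) hf1 hp k a hB
      fun x hx => hx₁ x (hBW x hx)
  have hkYW : prE p {x | x k = a ∧ Y x = b ∧ W x = c} = f k a x₁ * prE p {x | Y x = b ∧ W x = c} :=
    hkernel {x | Y x = b ∧ W x = c}
      (fun x y h => show (Y x = b ∧ W x = c) = (Y y = b ∧ W y = c) by rw [hY h, hW h])
      fun _ hx => hx.2
  have hkW : prE p {x | x k = a ∧ W x = c} = f k a x₁ * prE p {x | W x = c} :=
    hkernel {x | W x = c} (fun x y h => show (W x = c) = (W y = c) by rw [hW h]) fun _ hx => hx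
  show prE p {x | x k = a ∧ Y x = b ∧ W x = c} * prE p {x | W x = c} =
    prE p {x | x k = a ∧ W x = c} * prE p {x | Y x = b ∧ W x = c}
  rw [hkYW, hkW]
  ring

end LocalMarkov

section Layers

variable {d : ℕ} {E : Fin d → Fin d → Prop}

lemma mem_Aset_succ {j : ℕ} {m : Fin d} : m ∈ Aset E (j + 1) ↔ ∀ q, E q m → q ∈ Aset E j := by
  simp [Aset]

lemma Aset_subset_succ (j : ℕ) : Aset E j ⊆ Aset E (j + 1) := by
  induction j with
  | zero => simp [Aset]
  | succ j ih => exact fun m hm => mem_Aset_succ.mpr fun q hq => ih (mem_Aset_succ.mp hm q hq)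

lemma mem_Aset_of_rel {j : ℕ} {q m : Fin d} (hm : m ∈ Aset E j) (hqm : E q m) :
    q ∈ Aset E j := by
  cases j with
  | zero => simp [Aset] at hm
  | succ j => exact Aset_subset_succ j (mem_Aset_succ.mp hm q hqm)

lemma mem_Aset_of_reflTransGen {j : ℕ} {q m : Fin d} (hm : m ∈ Aset E j)
    (hqm : Relation.ReflTransGen E q m) : q ∈ Aset E j := by
  induction hqm using Relation.ReflTransGen.head_induction_on with
  | refl => exact hm
  | head hqr _ ih => exact mem_Aset_of_rel ih hqr

end Layers

theorem equal_entropy_ancestor_smaller_conditional_entropy_general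
    {d : ℕ} (p : (Fin d → Bool) → ℝ)
    (hpos : ∀ x, 0 < p x)
    (E : Fin d → Fin d → Prop) (hacyc : ∀ a, ¬ Relation.TransGen E a a)
    (hfact : Factorizes E p) (hstar : ℝ)
    (hconst : ∀ k : Fin d,
      condEnt p (fun x => x k) (restr (β := Bool) (paF E k)) = hstar)
    (j : ℕ) (k i : Fin d)
    (hk : k ∉ Aset E (j + 1))
    (hiL : i ∈ Aset E (j + 1) ∧ i ∉ Aset E j)
    (hanc : Relation.TransGen E i k)
    (hmi : 0 < condMI p (fun x => x k) (fun x => x i) (restr (β := Bool) (Aset E j))) :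
    condEnt p (fun x => x i) (restr (β := Bool) (Aset E j)) <
      condEnt p (fun x => x k) (restr (β := Bool) (Aset E j)) := by
  have hiA : ∀ m ∈ Aset E j, ¬ Relation.ReflTransGen E i m :=
    fun m hm him => hiL.2 (mem_Aset_of_reflTransGen hm him)
  have hkA : ∀ m ∈ Aset E j, ¬ Relation.ReflTransGen E k m :=
    fun m hm hkm => hk (mem_Aset_of_reflTransGen (Aset_subset_succ j hm) hkm)
  have hki : ¬ Relation.ReflTransGen E k i := fun hki => hacyc k (.trans_right hki hanc)
  have hpaA : paF E i ⊆ Aset E j := fun m hm => mem_Aset_succ.mp hiL.1 m (by simpa [paF] using hm)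
  have hi_eq : condEnt p (fun x => x i) (restr (Aset E j)) = hstar := by
    rw [condEnt_eq_of_condIndepRV hpos
      (hfact.condIndepRV_paF hacyc i ((dependsOn_restr _).mono hiA))
      fun x y hxy => dependsOn_restr _ fun m hm => congrFun hxy ⟨m, hpaA hm⟩, hconst i]
  have hk_ge : hstar ≤ condEnt p (fun x => x k) (fun x => (x i, restr (Aset E j) x)) :=
    hconst k ▸ condEnt_le_of_condIndepRV hpos (hfact.condIndepRV_paF hacyc k fun x y hxy =>
      Prod.ext (hxy i hki) (dependsOn_restr _ fun m hm => hxy m (hkA m hm)))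
  rw [condMI_eq_condEnt_sub] at hmi
  linarith

/-- Suppose the distribution factorizes over a DAG `E` whose layer
decomposition has ancestral sets `Aset E j`, and H(X_k | pa(k)) = h* is constant
across all nodes. If `k ∉ A_{j+1}` and `i ∈ L_{j+1} = A_{j+1} \ A_j` is an ancestor
of `k` with I(X_k; X_i | A_j) > 0, then H(X_i | A_j) < H(X_k | A_j). -/
theorem equal_entropy_ancestor_smaller_conditional_entropy
    {d : ℕ} (p : (Fin d → Bool) → ℝ)
    (hpos : ∀ x, 0 < p x) (hsum : ∑ x, p x = 1)
    (E : Fin d → Fin d → Prop) (hacyc : ∀ a, ¬ Relation.TransGen E a a)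
    (hfact : Factorizes E p) (hstar : ℝ)
    (hconst : ∀ k : Fin d,
      condEnt p (fun x => x k) (restr (β := Bool) (paF E k)) = hstar)
    (j : ℕ) (k i : Fin d)
    (hk : k ∉ Aset E (j + 1))
    (hiL : i ∈ Aset E (j + 1) ∧ i ∉ Aset E j)
    (hanc : Relation.TransGen E i k)
    (hmi : 0 < condMI p (fun x => x k) (fun x => x i) (restr (β := Bool) (Aset E j))) :
    condEnt p (fun x => x i) (restr (β := Bool) (Aset E j)) <
      condEnt p (fun x => x k) (restr (β := Bool) (Aset E j)) :=
  equal_entropy_ancestor_smaller_conditional_entropy_general p hpos E hacyc hfact hstar hconst j k i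
    hk hiL hanc hmi

end
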